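/- arXiv:1605.03564 — 6 statements merged into one kernel-verified Lean document; each statement's English description precedes it below -/
import Mathlib

section
/- Let G be a grid-labelled graph of type (a,b) with m ≥ 1 edges such that every edge is horizontal or vertical (i.e., for every edge {(i,j),(k,l)} of G, i = k or j = l). Then ρ(G) = L(G)/(2m) is separable. -/
open Matrix Kronecker ComplexOrder

/-- The partial transpose of a grid-labelled graph. -/
def PartialTranspose {a b : ℕ} (G : SimpleGraph (Fin a × Fin b)) :
    SimpleGraph (Fin a × Fin b) where
  Adj v w := G.Adj (w.1, v.2) (v.1, w.2)
  symm := by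
    constructor
    intro v w h
    exact G.adj_symm h
  loopless := by
    constructor
    intro v h
    exact G.irrefl h

instance {a b : ℕ} (G : SimpleGraph (Fin a × Fin b)) [h : DecidableRel G.Adj] :
    DecidableRel (PartialTranspose G).Adj :=
  fun v w => h (w.1, v.2) (v.1, w.2)

/-- Separability of a bipartite density matrix. -/
def MatSeparable {a b : ℕ} (ρ : Matrix (Fin a × Fin b) (Fin a × Fin b) ℂ) : Prop :=
  ∃ (n : ℕ) (A : Fin n → Matrix (Fin a) (Fin a) ℂ) (B : Fin n → Matrix (Fin b) (Fin b) ℂ),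
    (∀ i, (A i).PosSemidef) ∧ (∀ i, (B i).PosSemidef) ∧ ρ = ∑ i, (A i) ⊗ₖ (B i)

/-- The density matrix of a grid-labelled graph: `L(G)/(2m)`. -/
noncomputable def densityMatrix {a b : ℕ} (G : SimpleGraph (Fin a × Fin b))
    [DecidableRel G.Adj] : Matrix (Fin a × Fin b) (Fin a × Fin b) ℂ :=
  ((1 : ℂ) / (2 * (G.edgeFinset.card : ℂ))) • G.lapMatrix ℂ

/-- Degree criterion. -/
def DegreeCriterion {a b : ℕ} (G : SimpleGraph (Fin a × Fin b)) [DecidableRel G.Adj] : Prop :=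
  ∀ v, G.degree v = (PartialTranspose G).degree v

/-! ### Auxiliary lemmas -/

lemma psd_vecMulVec {k : ℕ} (x : Fin k → ℂ) (hx : star x = x) :
    (Matrix.vecMulVec x x).PosSemidef := by
  have h := Matrix.posSemidef_conjTranspose_mul_self (Matrix.replicateRow Unit x)
  rwa [Matrix.conjTranspose_replicateRow, hx, ← Matrix.vecMulVec_eq Unit] at h

lemma psd_smul {k : ℕ} {M : Matrix (Fin k) (Fin k) ℂ} (hM : M.PosSemidef) (c : ℝ) (hc : 0 ≤ c) :
    ((c : ℂ) • M).PosSemidef := by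
  constructor
  · rw [Matrix.IsHermitian, Matrix.conjTranspose_smul, hM.1]
    simp
  · intro y
    exact (hM.smul (show (0:ℂ) ≤ (c:ℂ) by exact_mod_cast hc)).2 y

lemma kron_vecMulVec {a b : ℕ} (x : Fin a → ℂ) (y : Fin b → ℂ) :
    (Matrix.vecMulVec x x) ⊗ₖ (Matrix.vecMulVec y y)
      = Matrix.vecMulVec (fun p : Fin a × Fin b => x p.1 * y p.2)
          (fun p : Fin a × Fin b => x p.1 * y p.2) := by
  ext ⟨i,j⟩ ⟨k,l⟩
  simp [Matrix.vecMulVec_apply, Matrix.kroneckerMap_apply]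
  ring

lemma star_indicator {k : ℕ} (i0 : Fin k) :
    star (fun i => if i = i0 then (1:ℂ) else 0) = fun i => if i = i0 then (1:ℂ) else 0 := by
  funext i
  simp [Pi.star_apply, apply_ite (star : ℂ → ℂ)]

lemma star_diff {k : ℕ} (i0 i1 : Fin k) :
    star (fun i => (if i = i0 then (1:ℂ) else 0) - (if i = i1 then 1 else 0))
      = fun i => (if i = i0 then (1:ℂ) else 0) - (if i = i1 then 1 else 0) := by
  funext i
  simp [Pi.star_apply, apply_ite (star : ℂ → ℂ)]

lemma lap_decomp {V : Type*} [Fintype V] [DecidableEq V] (G : SimpleGraph V)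
    [DecidableRel G.Adj] :
    G.lapMatrix ℂ = (2⁻¹ : ℂ) • ∑ v : V, ∑ w : V,
      (if G.Adj v w then Matrix.vecMulVec
          (fun y => (if y = v then (1:ℂ) else 0) - (if y = w then 1 else 0))
          (fun y => (if y = v then (1:ℂ) else 0) - (if y = w then 1 else 0)) else 0) := by
  have hdeg : ∀ v : V, (∑ w, G.adjMatrix ℂ v w) = (G.degree v : ℂ) := by
    intro v
    simp [SimpleGraph.adjMatrix_apply, Finset.sum_boole, SimpleGraph.degree,
      SimpleGraph.neighborFinset_eq_filter]
  have hdeg' : ∀ w : V, (∑ v, G.adjMatrix ℂ v w) = (G.degree w : ℂ) := by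
    intro w
    simp [SimpleGraph.adjMatrix_apply, Finset.sum_boole, SimpleGraph.degree,
      SimpleGraph.neighborFinset_eq_filter, SimpleGraph.adj_comm]
  ext p q
  simp only [Matrix.smul_apply, Matrix.sum_apply, smul_eq_mul]
  have key : ∀ v w : V, (if G.Adj v w then Matrix.vecMulVec
          (fun y => (if y = v then (1:ℂ) else 0) - (if y = w then 1 else 0))
          (fun y => (if y = v then (1:ℂ) else 0) - (if y = w then 1 else 0)) else 0) p q
      = G.adjMatrix ℂ v w * (if p = v then (1:ℂ) else 0) * (if q = v then (1:ℂ) else 0)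
        - G.adjMatrix ℂ v w * (if p = v then (1:ℂ) else 0) * (if q = w then (1:ℂ) else 0)
        - G.adjMatrix ℂ v w * (if p = w then (1:ℂ) else 0) * (if q = v then (1:ℂ) else 0)
        + G.adjMatrix ℂ v w * (if p = w then (1:ℂ) else 0) * (if q = w then (1:ℂ) else 0) := by
    intro v w
    by_cases h : G.Adj v w
    · rw [if_pos h]
      simp only [Matrix.vecMulVec_apply, SimpleGraph.adjMatrix_apply, if_pos h]
      ring
    · rw [if_neg h]
      simp [SimpleGraph.adjMatrix_apply, h]
  simp only [key, Finset.sum_add_distrib, Finset.sum_sub_distrib]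
  have h1 : ∑ v, ∑ w, G.adjMatrix ℂ v w * (if p = v then (1:ℂ) else 0) * (if q = v then (1:ℂ) else 0)
      = if q = p then (G.degree p : ℂ) else 0 := by
    have step : ∀ v : V, ∑ w, G.adjMatrix ℂ v w * (if p = v then (1:ℂ) else 0) * (if q = v then (1:ℂ) else 0)
        = (if p = v then (1:ℂ) else 0) * ((if q = v then (1:ℂ) else 0) * (G.degree v : ℂ)) := by
      intro v
      rw [Finset.sum_congr rfl (fun w _ => by ring :
        ∀ w ∈ Finset.univ, G.adjMatrix ℂ v w * (if p = v then (1:ℂ) else 0) * (if q = v then (1:ℂ) else 0)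
          = (if p = v then (1:ℂ) else 0) * ((if q = v then (1:ℂ) else 0) * G.adjMatrix ℂ v w)),
        ← Finset.mul_sum, ← Finset.mul_sum, hdeg]
    simp only [step, ite_mul, one_mul, zero_mul, Finset.sum_ite_eq, Finset.mem_univ, if_true]
  have h2 : ∑ v, ∑ w, G.adjMatrix ℂ v w * (if p = v then (1:ℂ) else 0) * (if q = w then (1:ℂ) else 0)
      = G.adjMatrix ℂ p q := by
    simp only [mul_ite, mul_one, mul_zero, ite_mul, zero_mul, Finset.sum_ite_eq,
      Finset.mem_univ, if_true]
  have h3 : ∑ v, ∑ w, G.adjMatrix ℂ v w * (if p = w then (1:ℂ) else 0) * (if q = v then (1:ℂ) else 0)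
      = G.adjMatrix ℂ q p := by
    rw [Finset.sum_comm]
    simp only [mul_ite, mul_one, mul_zero, ite_mul, zero_mul, Finset.sum_ite_eq,
      Finset.mem_univ, if_true]
  have h4 : ∑ v, ∑ w, G.adjMatrix ℂ v w * (if p = w then (1:ℂ) else 0) * (if q = w then (1:ℂ) else 0)
      = if q = p then (G.degree p : ℂ) else 0 := by
    rw [Finset.sum_comm]
    have step : ∀ w : V, ∑ v, G.adjMatrix ℂ v w * (if p = w then (1:ℂ) else 0) * (if q = w then (1:ℂ) else 0)
        = (if p = w then (1:ℂ) else 0) * ((if q = w then (1:ℂ) else 0) * (G.degree w : ℂ)) := by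
      intro w
      rw [Finset.sum_congr rfl (fun v _ => by ring :
        ∀ v ∈ Finset.univ, G.adjMatrix ℂ v w * (if p = w then (1:ℂ) else 0) * (if q = w then (1:ℂ) else 0)
          = (if p = w then (1:ℂ) else 0) * ((if q = w then (1:ℂ) else 0) * G.adjMatrix ℂ v w)),
        ← Finset.mul_sum, ← Finset.mul_sum, hdeg']
    simp only [step, ite_mul, one_mul, zero_mul, Finset.sum_ite_eq, Finset.mem_univ, if_true]
  rw [h1, h2, h3, h4]
  have hsym : G.adjMatrix ℂ q p = G.adjMatrix ℂ p q := by
    simp [SimpleGraph.adjMatrix_apply, SimpleGraph.adj_comm]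
  rw [hsym]
  simp only [SimpleGraph.lapMatrix, Matrix.sub_apply, SimpleGraph.degMatrix,
    Matrix.diagonal_apply, SimpleGraph.adjMatrix_apply]
  by_cases h : p = q <;> simp [h, eq_comm] <;> ring

/-- First factor for the edge `(P.1, P.2)`. -/
noncomputable def Amat {a b : ℕ} (G : SimpleGraph (Fin a × Fin b)) [DecidableRel G.Adj] (c : ℝ)
    (P : (Fin a × Fin b) × (Fin a × Fin b)) : Matrix (Fin a) (Fin a) ℂ :=
  if G.Adj P.1 P.2 then
    (c : ℂ) • (if P.1.1 = P.2.1 then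
      Matrix.vecMulVec (fun i => if i = P.1.1 then (1:ℂ) else 0)
        (fun i => if i = P.1.1 then (1:ℂ) else 0)
    else
      Matrix.vecMulVec (fun i => (if i = P.1.1 then (1:ℂ) else 0) - (if i = P.2.1 then 1 else 0))
        (fun i => (if i = P.1.1 then (1:ℂ) else 0) - (if i = P.2.1 then 1 else 0)))
  else 0

/-- Second factor for the edge `(P.1, P.2)`. -/
noncomputable def Bmat {a b : ℕ} (G : SimpleGraph (Fin a × Fin b)) [DecidableRel G.Adj]
    (P : (Fin a × Fin b) × (Fin a × Fin b)) : Matrix (Fin b) (Fin b) ℂ :=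
  if G.Adj P.1 P.2 then
    (if P.1.1 = P.2.1 then
      Matrix.vecMulVec (fun j => (if j = P.1.2 then (1:ℂ) else 0) - (if j = P.2.2 then 1 else 0))
        (fun j => (if j = P.1.2 then (1:ℂ) else 0) - (if j = P.2.2 then 1 else 0))
    else
      Matrix.vecMulVec (fun j => if j = P.1.2 then (1:ℂ) else 0)
        (fun j => if j = P.1.2 then (1:ℂ) else 0))
  else 0

theorem statement5 {a b : ℕ} (G : SimpleGraph (Fin a × Fin b)) [DecidableRel G.Adj]
    (hm : 1 ≤ G.edgeFinset.card)
    (hHV : ∀ v w : Fin a × Fin b, G.Adj v w → v.1 = w.1 ∨ v.2 = w.2) :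
    MatSeparable (densityMatrix G) := by
  classical
  set c : ℝ := (4 * (G.edgeFinset.card : ℝ))⁻¹ with hc_def
  have hmR : (0:ℝ) < (G.edgeFinset.card : ℝ) := by exact_mod_cast hm
  have hc : 0 ≤ c := by positivity
  set e := (Fintype.equivFin ((Fin a × Fin b) × (Fin a × Fin b))).symm with he
  have hA_psd : ∀ P, (Amat G c P).PosSemidef := by
    intro P
    unfold Amat
    split_ifs with h1 h2
    · exact psd_smul (psd_vecMulVec _ (star_indicator _)) c hc
    · exact psd_smul (psd_vecMulVec _ (star_diff _ _)) c hc
    · exact Matrix.PosSemidef.zero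
  have hB_psd : ∀ P, (Bmat G P).PosSemidef := by
    intro P
    unfold Bmat
    split_ifs with h1 h2
    · exact psd_vecMulVec _ (star_diff _ _)
    · exact psd_vecMulVec _ (star_indicator _)
    · exact Matrix.PosSemidef.zero
  refine ⟨Fintype.card ((Fin a × Fin b) × (Fin a × Fin b)),
    fun i => Amat G c (e i), fun i => Bmat G (e i),
    fun i => hA_psd (e i), fun i => hB_psd (e i), ?_⟩
  · have hPK : ∀ P : (Fin a × Fin b) × (Fin a × Fin b),
        (Amat G c P) ⊗ₖ (Bmat G P) = if G.Adj P.1 P.2 then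
          (c : ℂ) • Matrix.vecMulVec
            (fun y => (if y = P.1 then (1:ℂ) else 0) - (if y = P.2 then 1 else 0))
            (fun y => (if y = P.1 then (1:ℂ) else 0) - (if y = P.2 then 1 else 0))
          else 0 := by
      rintro ⟨v, w⟩
      by_cases hA : G.Adj v w
      · unfold Amat Bmat
        simp only [if_pos hA]
        by_cases h1 : v.1 = w.1
        · simp only [if_pos h1]
          rw [Matrix.smul_kronecker, kron_vecMulVec]
          congr 1
          have hz : (fun p : Fin a × Fin b => (if p.1 = v.1 then (1:ℂ) else 0) *
                ((if p.2 = v.2 then (1:ℂ) else 0) - (if p.2 = w.2 then 1 else 0)))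
              = fun y => (if y = v then (1:ℂ) else 0) - (if y = w then 1 else 0) := by
            funext p
            obtain ⟨i, j⟩ := p
            obtain ⟨v1, v2⟩ := v
            obtain ⟨w1, w2⟩ := w
            simp only at h1
            subst h1
            by_cases hi : i = v1 <;> by_cases hj : j = v2 <;> by_cases hj2 : j = w2 <;>
              simp [Prod.ext_iff, hi, hj, hj2]
          rw [hz]
        · have h2 : v.2 = w.2 := (hHV v w hA).resolve_left h1
          simp only [if_neg h1]
          rw [Matrix.smul_kronecker, kron_vecMulVec]
          congr 1
          have hz : (fun p : Fin a × Fin b =>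
                ((if p.1 = v.1 then (1:ℂ) else 0) - (if p.1 = w.1 then 1 else 0)) *
                (if p.2 = v.2 then (1:ℂ) else 0))
              = fun y => (if y = v then (1:ℂ) else 0) - (if y = w then 1 else 0) := by
            funext p
            obtain ⟨i, j⟩ := p
            obtain ⟨v1, v2⟩ := v
            obtain ⟨w1, w2⟩ := w
            simp only at h2
            subst h2
            by_cases hj : j = v2 <;> by_cases hi : i = v1 <;> by_cases hi2 : i = w1 <;>
              simp [Prod.ext_iff, hi, hj, hi2]
          rw [hz]
      · unfold Amat Bmat
        simp only [if_neg hA]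
        exact Matrix.zero_kronecker _
    rw [Equiv.sum_comp e (fun P => (Amat G c P) ⊗ₖ (Bmat G P))]
    simp only [hPK]
    unfold densityMatrix
    rw [lap_decomp, smul_smul]
    conv_rhs => rw [Fintype.sum_prod_type]
    rw [Finset.smul_sum]
    refine Finset.sum_congr rfl fun v _ => ?_
    rw [Finset.smul_sum]
    refine Finset.sum_congr rfl fun w _ => ?_
    by_cases hA : G.Adj v w
    · rw [if_pos hA, if_pos hA]
      dsimp only
      congr 1
      rw [hc_def]
      push_cast
      rw [one_div, ← mul_inv]
      norm_num
      ring_nf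
    · rw [if_neg hA, if_neg hA, smul_zero]
end

section
/- Let G be a grid-labelled graph of type (a,b) and let D be the spanning subgraph of G whose edges are exactly the diagonal edges of G. Then G satisfies the degree criterion if and only if D satisfies the degree criterion; that is, (∀ v, deg_G(v) = deg_{Γ(G)}(v)) ↔ (∀ v, deg_D(v) = deg_{Γ(D)}(v)). -/
open Matrix Kronecker ComplexOrder

lemma deg_split {a b : ℕ} (H : SimpleGraph (Fin a × Fin b)) [DecidableRel H.Adj]
    (v : Fin a × Fin b) :
    H.degree v =
      (Finset.univ.filter (fun w => H.Adj v w ∧ (v.1 ≠ w.1 ∧ v.2 ≠ w.2))).card +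
      (Finset.univ.filter (fun w => H.Adj v w ∧ ¬(v.1 ≠ w.1 ∧ v.2 ≠ w.2))).card := by
  rw [SimpleGraph.degree, SimpleGraph.neighborFinset_eq_filter,
    ← Finset.card_filter_add_card_filter_not (s := Finset.univ.filter (H.Adj v))
    (p := fun w => v.1 ≠ w.1 ∧ v.2 ≠ w.2)]
  congr 1
  · congr 1
    ext w
    simp [Finset.filter_filter, and_comm]
  · rw [Finset.filter_filter]

theorem statement9 {a b : ℕ} (G D : SimpleGraph (Fin a × Fin b))
    [DecidableRel G.Adj] [DecidableRel D.Adj]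
    (hD : ∀ v w : Fin a × Fin b, D.Adj v w ↔ (G.Adj v w ∧ v.1 ≠ w.1 ∧ v.2 ≠ w.2)) :
    (∀ v, G.degree v = (PartialTranspose G).degree v) ↔
      (∀ v, D.degree v = (PartialTranspose D).degree v) := by
  have key : ∀ v, G.degree v + (PartialTranspose D).degree v
      = (PartialTranspose G).degree v + D.degree v := by
    intro v
    rw [deg_split G v, deg_split (PartialTranspose G) v, deg_split D v,
      deg_split (PartialTranspose D) v]
    have h1 : (Finset.univ.filter (fun w => D.Adj v w ∧ (v.1 ≠ w.1 ∧ v.2 ≠ w.2)))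
        = (Finset.univ.filter (fun w => G.Adj v w ∧ (v.1 ≠ w.1 ∧ v.2 ≠ w.2))) := by
      apply Finset.filter_congr
      intro w _
      rw [hD]
      tauto
    have h2 : (Finset.univ.filter (fun w => (PartialTranspose D).Adj v w ∧ (v.1 ≠ w.1 ∧ v.2 ≠ w.2)))
        = (Finset.univ.filter (fun w => (PartialTranspose G).Adj v w ∧ (v.1 ≠ w.1 ∧ v.2 ≠ w.2))) := by
      apply Finset.filter_congr
      intro w _
      show (D.Adj (w.1, v.2) (v.1, w.2) ∧ _) ↔ (G.Adj (w.1, v.2) (v.1, w.2) ∧ _)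
      rw [hD]
      simp only [ne_eq]
      constructor
      · rintro ⟨⟨h, _, _⟩, h3, h4⟩; exact ⟨h, h3, h4⟩
      · rintro ⟨h, h3, h4⟩
        exact ⟨⟨h, fun e => h3 e.symm, h4⟩, h3, h4⟩
    have h3 : ∀ (H : SimpleGraph (Fin a × Fin b)) (_ : DecidableRel H.Adj),
        (Finset.univ.filter (fun w => (PartialTranspose H).Adj v w ∧ ¬(v.1 ≠ w.1 ∧ v.2 ≠ w.2)))
        = (Finset.univ.filter (fun w => H.Adj v w ∧ ¬(v.1 ≠ w.1 ∧ v.2 ≠ w.2))) := by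
      intro H _
      apply Finset.filter_congr
      intro w _
      obtain ⟨v1, v2⟩ := v
      obtain ⟨w1, w2⟩ := w
      show (H.Adj (w1, v2) (v1, w2) ∧ _) ↔ (H.Adj (v1, v2) (w1, w2) ∧ _)
      simp only [ne_eq, not_and, not_not]
      constructor
      · rintro ⟨h, hn⟩
        refine ⟨?_, hn⟩
        rcases eq_or_ne v1 w1 with he | he
        · subst he; exact h
        · have h2 := hn he; subst h2
          exact (H.adj_comm _ _).mp h
      · rintro ⟨h, hn⟩
        refine ⟨?_, hn⟩
        rcases eq_or_ne v1 w1 with he | he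
        · subst he; exact h
        · have h2 := hn he; subst h2
          exact (H.adj_comm _ _).mp h
    have h4 : (Finset.univ.filter (fun w => D.Adj v w ∧ ¬(v.1 ≠ w.1 ∧ v.2 ≠ w.2))) = ∅ := by
      rw [Finset.filter_eq_empty_iff]
      intro w _
      rw [hD]
      tauto
    rw [h1, h2, h3 G inferInstance, h3 D inferInstance, h4]
    simp only [Finset.card_empty]
    ring
  constructor
  · intro h v
    have := key v
    have := h v
    omega
  · intro h v
    have := key v
    have := h v
    omega
end

section
/- Let G be a row-stratified grid-labelled graph of type (a,b), i.e., every diagonal edge {(i,j),(k,l)} of G satisfies |i − k| = 1 (as natural-number values of the row indices). For each row index i with i+1 < a, let S_i be the spanning subgraph of G whose edges are the diagonal edges of G with one endpoint in row i and the other in row i+1. If G satisfies the degree criterion, then every S_i satisfies the degree criterion. -/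
open Matrix Kronecker ComplexOrder

open Finset

section Aux
variable {a b : ℕ}

lemma pt_adj (G : SimpleGraph (Fin a × Fin b)) (v w : Fin a × Fin b) :
    (PartialTranspose G).Adj v w ↔ G.Adj (w.1, v.2) (v.1, w.2) := Iff.rfl

def hCnt (H : SimpleGraph (Fin a × Fin b)) [DecidableRel H.Adj] (v : Fin a × Fin b) : ℕ :=
  (univ.filter (fun w => H.Adj v w ∧ w.1 = v.1)).card

def vCnt (H : SimpleGraph (Fin a × Fin b)) [DecidableRel H.Adj] (v : Fin a × Fin b) : ℕ :=
  (univ.filter (fun w => H.Adj v w ∧ w.1 ≠ v.1 ∧ w.2 = v.2)).card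

def upCnt (H : SimpleGraph (Fin a × Fin b)) [DecidableRel H.Adj] (v : Fin a × Fin b) : ℕ :=
  (univ.filter (fun w => H.Adj v w ∧ w.2 ≠ v.2 ∧ w.1.val = v.1.val + 1)).card

def dnCnt (H : SimpleGraph (Fin a × Fin b)) [DecidableRel H.Adj] (v : Fin a × Fin b) : ℕ :=
  (univ.filter (fun w => H.Adj v w ∧ w.2 ≠ v.2 ∧ v.1.val = w.1.val + 1)).card

lemma hCnt_pt (G : SimpleGraph (Fin a × Fin b)) [DecidableRel G.Adj] (v : Fin a × Fin b) :
    hCnt (PartialTranspose G) v = hCnt G v := by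
  unfold hCnt
  congr 1
  apply Finset.filter_congr
  intro w _
  simp only [pt_adj, and_congr_left_iff]
  intro h1
  rw [show ((w.1 : Fin a), v.2) = v from Prod.ext h1 rfl,
    show ((v.1 : Fin a), w.2) = w from Prod.ext h1.symm rfl]

lemma vCnt_pt (G : SimpleGraph (Fin a × Fin b)) [DecidableRel G.Adj] (v : Fin a × Fin b) :
    vCnt (PartialTranspose G) v = vCnt G v := by
  unfold vCnt
  congr 1
  apply Finset.filter_congr
  intro w _
  constructor
  · rintro ⟨h, h1, h2⟩
    refine ⟨?_, h1, h2⟩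
    rw [pt_adj, show ((w.1 : Fin a), v.2) = w from Prod.ext rfl h2.symm,
      show ((v.1 : Fin a), w.2) = v from Prod.ext rfl h2] at h
    exact h.symm
  · rintro ⟨h, h1, h2⟩
    refine ⟨?_, h1, h2⟩
    rw [pt_adj, show ((w.1 : Fin a), v.2) = w from Prod.ext rfl h2.symm,
      show ((v.1 : Fin a), w.2) = v from Prod.ext rfl h2]
    exact h.symm

lemma bridge1 (G : SimpleGraph (Fin a × Fin b)) [DecidableRel G.Adj] (v u : Fin a × Fin b)
    (hu2 : u.2 = v.2) (hu1 : u.1.val = v.1.val + 1) :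
    upCnt (PartialTranspose G) v = dnCnt G u := by
  unfold upCnt dnCnt
  apply Finset.card_nbij' (i := fun w => (v.1, w.2)) (j := fun w => (u.1, w.2))
  · intro w hw
    simp only [mem_coe, mem_filter, mem_univ, true_and, pt_adj] at hw ⊢
    obtain ⟨h, h2, h1⟩ := hw
    have hw1 : w.1 = u.1 := Fin.ext (by omega)
    rw [hw1, show ((u.1 : Fin a), v.2) = u from Prod.ext rfl hu2.symm] at h
    refine ⟨h, ?_, ?_⟩
    · show w.2 ≠ u.2
      rw [hu2]; exact h2
    · show u.1.val = v.1.val + 1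
      omega
  · intro w hw
    simp only [mem_coe, mem_filter, mem_univ, true_and, pt_adj] at hw ⊢
    obtain ⟨h, h2, h1⟩ := hw
    rw [show ((u.1 : Fin a), v.2) = u from Prod.ext rfl hu2.symm,
      show ((v.1 : Fin a), w.2) = w from
        Prod.ext (show v.1 = w.1 from Fin.ext (by omega)) rfl]
    refine ⟨h, ?_, ?_⟩
    · show w.2 ≠ v.2
      rw [← hu2]; exact h2
    · show u.1.val = v.1.val + 1
      omega
  · intro w hw
    simp only [mem_coe, mem_filter, mem_univ, true_and, pt_adj] at hw
    exact Prod.ext (show u.1 = w.1 from Fin.ext (by have := hw.2.2; omega)) rfl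
  · intro w hw
    simp only [mem_coe, mem_filter, mem_univ, true_and] at hw
    exact Prod.ext (show v.1 = w.1 from Fin.ext (by have := hw.2.2; omega)) rfl

lemma bridge2 (G : SimpleGraph (Fin a × Fin b)) [DecidableRel G.Adj] (v u : Fin a × Fin b)
    (hu2 : u.2 = v.2) (hu1 : v.1.val = u.1.val + 1) :
    dnCnt (PartialTranspose G) v = upCnt G u := by
  unfold upCnt dnCnt
  apply Finset.card_nbij' (i := fun w => (v.1, w.2)) (j := fun w => (u.1, w.2))
  · intro w hw
    simp only [mem_coe, mem_filter, mem_univ, true_and, pt_adj] at hw ⊢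
    obtain ⟨h, h2, h1⟩ := hw
    have hw1 : w.1 = u.1 := Fin.ext (by omega)
    rw [hw1, show ((u.1 : Fin a), v.2) = u from Prod.ext rfl hu2.symm] at h
    refine ⟨h, ?_, ?_⟩
    · show w.2 ≠ u.2
      rw [hu2]; exact h2
    · show v.1.val = u.1.val + 1
      omega
  · intro w hw
    simp only [mem_coe, mem_filter, mem_univ, true_and, pt_adj] at hw ⊢
    obtain ⟨h, h2, h1⟩ := hw
    rw [show ((u.1 : Fin a), v.2) = u from Prod.ext rfl hu2.symm,
      show ((v.1 : Fin a), w.2) = w from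
        Prod.ext (show v.1 = w.1 from Fin.ext (by omega)) rfl]
    refine ⟨h, ?_, ?_⟩
    · show w.2 ≠ v.2
      rw [← hu2]; exact h2
    · show v.1.val = u.1.val + 1
      omega
  · intro w hw
    simp only [mem_coe, mem_filter, mem_univ, true_and, pt_adj] at hw
    exact Prod.ext (show u.1 = w.1 from Fin.ext (by have := hw.2.2; omega)) rfl
  · intro w hw
    simp only [mem_coe, mem_filter, mem_univ, true_and] at hw
    exact Prod.ext (show v.1 = w.1 from Fin.ext (by have := hw.2.2; omega)) rfl

lemma botZero (H : SimpleGraph (Fin a × Fin b)) [DecidableRel H.Adj] (v : Fin a × Fin b)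
    (hv : v.1.val = 0) : dnCnt H v = 0 := by
  unfold dnCnt
  rw [Finset.card_eq_zero, Finset.filter_eq_empty_iff]
  rintro w _ ⟨_, _, h1⟩
  omega

lemma degSplit (H : SimpleGraph (Fin a × Fin b)) [DecidableRel H.Adj]
    (hstrat : ∀ v w : Fin a × Fin b, H.Adj v w → v.1 ≠ w.1 → v.2 ≠ w.2 →
      (v.1.val = w.1.val + 1 ∨ w.1.val = v.1.val + 1)) (v : Fin a × Fin b) :
    H.degree v = hCnt H v + vCnt H v + upCnt H v + dnCnt H v := by
  rw [SimpleGraph.degree, SimpleGraph.neighborFinset_eq_filter]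
  unfold hCnt vCnt upCnt dnCnt
  have : ({w | H.Adj v w} : Finset _) = univ.filter (fun w => H.Adj v w) := rfl
  rw [this, Finset.card_filter, Finset.card_filter, Finset.card_filter, Finset.card_filter,
    Finset.card_filter, ← Finset.sum_add_distrib, ← Finset.sum_add_distrib,
    ← Finset.sum_add_distrib]
  refine Finset.sum_congr rfl fun w _ => ?_
  by_cases h : H.Adj v w
  · have hvw : ¬(w.1.val = v.1.val ∧ w.2.val = v.2.val) := by
      rintro ⟨h1, h2⟩
      exact H.ne_of_adj h (Prod.ext (Fin.ext h1) (Fin.ext h2)).symm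
    have hd : w.1.val ≠ v.1.val → w.2.val ≠ v.2.val →
        (v.1.val = w.1.val + 1 ∨ w.1.val = v.1.val + 1) := by
      intro h1 h2
      exact hstrat v w h (fun e => h1 (congrArg Fin.val e).symm)
        (fun e => h2 (congrArg Fin.val e).symm)
    simp only [h, true_and, if_true, ne_eq, Fin.ext_iff]
    split_ifs <;> omega
  · simp [h]

lemma strat_pt (G : SimpleGraph (Fin a × Fin b))
    (hstrat : ∀ v w : Fin a × Fin b, G.Adj v w → v.1 ≠ w.1 → v.2 ≠ w.2 →
      (v.1.val = w.1.val + 1 ∨ w.1.val = v.1.val + 1)) :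
    ∀ v w : Fin a × Fin b, (PartialTranspose G).Adj v w → v.1 ≠ w.1 → v.2 ≠ w.2 →
      (v.1.val = w.1.val + 1 ∨ w.1.val = v.1.val + 1) := by
  intro v w h h1 h2
  exact (hstrat (w.1, v.2) (v.1, w.2) h (fun e => h1 e.symm) h2).symm

lemma balance (G : SimpleGraph (Fin a × Fin b)) [DecidableRel G.Adj]
    (hstrat : ∀ v w : Fin a × Fin b, G.Adj v w → v.1 ≠ w.1 → v.2 ≠ w.2 →
      (v.1.val = w.1.val + 1 ∨ w.1.val = v.1.val + 1))
    (hdc : ∀ v, G.degree v = (PartialTranspose G).degree v) (v : Fin a × Fin b) :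
    upCnt G v + dnCnt G v = upCnt (PartialTranspose G) v + dnCnt (PartialTranspose G) v := by
  have e1 := degSplit G hstrat v
  have e2 := degSplit (PartialTranspose G) (strat_pt G hstrat) v
  have e3 := hdc v
  have e4 := hCnt_pt G v
  have e5 := vCnt_pt G v
  omega

lemma keyLemma (G : SimpleGraph (Fin a × Fin b)) [DecidableRel G.Adj]
    (hstrat : ∀ v w : Fin a × Fin b, G.Adj v w → v.1 ≠ w.1 → v.2 ≠ w.2 →
      (v.1.val = w.1.val + 1 ∨ w.1.val = v.1.val + 1))
    (hdc : ∀ v, G.degree v = (PartialTranspose G).degree v) :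
    ∀ n (v u : Fin a × Fin b), v.1.val = n → u.2 = v.2 → u.1.val = v.1.val + 1 →
      upCnt G v = dnCnt G u := by
  intro n
  induction n with
  | zero =>
    intro v u hv hu2 hu1
    have hb : dnCnt G v = 0 := botZero G v hv
    have hb' : dnCnt (PartialTranspose G) v = 0 := botZero (PartialTranspose G) v hv
    have h1 := balance G hstrat hdc v
    have h2 := bridge1 G v u hu2 hu1
    omega
  | succ n ih =>
    intro v u hv hu2 hu1
    have hn : n < a := by have := v.1.isLt; omega
    have h1 : upCnt G (⟨n, hn⟩, v.2) = dnCnt G v :=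
      ih (⟨n, hn⟩, v.2) v rfl rfl (by simpa using hv)
    have h2 : dnCnt (PartialTranspose G) v = upCnt G (⟨n, hn⟩, v.2) :=
      bridge2 G v (⟨n, hn⟩, v.2) rfl (by simpa using hv)
    have h3 := balance G hstrat hdc v
    have h4 := bridge1 G v u hu2 hu1
    omega
end Aux

theorem statement10 {a b : ℕ} (G : SimpleGraph (Fin a × Fin b)) [DecidableRel G.Adj]
    (hstrat : ∀ v w : Fin a × Fin b, G.Adj v w → v.1 ≠ w.1 → v.2 ≠ w.2 →
      (v.1.val = w.1.val + 1 ∨ w.1.val = v.1.val + 1))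
    (hdc : ∀ v, G.degree v = (PartialTranspose G).degree v)
    (i : ℕ) (hi : i + 1 < a)
    (S : SimpleGraph (Fin a × Fin b)) [DecidableRel S.Adj]
    (hS : ∀ v w : Fin a × Fin b, S.Adj v w ↔
      (G.Adj v w ∧ v.1 ≠ w.1 ∧ v.2 ≠ w.2 ∧
        ((v.1.val = i ∧ w.1.val = i + 1) ∨ (v.1.val = i + 1 ∧ w.1.val = i)))) :
    ∀ v, S.degree v = (PartialTranspose S).degree v := by
  classical
  intro v
  have degS : S.degree v = (Finset.univ.filter (fun w => S.Adj v w)).card := by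
    rw [SimpleGraph.degree, SimpleGraph.neighborFinset_eq_filter]
  have degPS : (PartialTranspose S).degree v
      = (Finset.univ.filter (fun w : Fin a × Fin b => S.Adj (w.1, v.2) (v.1, w.2))).card := by
    rw [SimpleGraph.degree, SimpleGraph.neighborFinset_eq_filter]
    rfl
  by_cases hvi : v.1.val = i
  · -- row i : degree = upCnt G v, PT degree = upCnt (PT G) v
    have e1 : S.degree v = upCnt G v := by
      rw [degS]; unfold upCnt; congr 1
      apply Finset.filter_congr
      intro w _
      rw [hS]
      constructor
      · rintro ⟨h, h1, h2, h3⟩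
        exact ⟨h, fun e => h2 e.symm, by omega⟩
      · rintro ⟨h, h2, h3⟩
        exact ⟨h, fun e => by have := congrArg Fin.val e; omega,
          fun e => h2 e.symm, Or.inl ⟨hvi, by omega⟩⟩
    have e2 : (PartialTranspose S).degree v = upCnt (PartialTranspose G) v := by
      rw [degPS]; unfold upCnt; congr 1
      apply Finset.filter_congr
      intro w _
      rw [hS]
      dsimp only
      rw [pt_adj]
      constructor
      · rintro ⟨h, h1, h2, h3⟩
        have h1' : w.1.val ≠ v.1.val := fun e => h1 (Fin.ext e)
        exact ⟨h, fun e => h2 e.symm, by omega⟩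
      · rintro ⟨h, h2, h3⟩
        exact ⟨h, fun e => by have := congrArg Fin.val e; omega,
          fun e => h2 e.symm, Or.inr ⟨by omega, hvi⟩⟩
    set u : Fin a × Fin b := (⟨i + 1, hi⟩, v.2) with hu
    have k1 : upCnt G v = dnCnt G u :=
      keyLemma G hstrat hdc v.1.val v u rfl rfl (by simp [hu, hvi])
    have k2 : upCnt (PartialTranspose G) v = dnCnt G u :=
      bridge1 G v u rfl (by simp [hu, hvi])
    rw [e1, e2, k1, k2]
  · by_cases hvi1 : v.1.val = i + 1
    · -- row i+1 : degree = dnCnt G v, PT degree = dnCnt (PT G) v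
      have e1 : S.degree v = dnCnt G v := by
        rw [degS]; unfold dnCnt; congr 1
        apply Finset.filter_congr
        intro w _
        rw [hS]
        constructor
        · rintro ⟨h, h1, h2, h3⟩
          exact ⟨h, fun e => h2 e.symm, by omega⟩
        · rintro ⟨h, h2, h3⟩
          exact ⟨h, fun e => by have := congrArg Fin.val e; omega,
            fun e => h2 e.symm, Or.inr ⟨hvi1, by omega⟩⟩
      have e2 : (PartialTranspose S).degree v = dnCnt (PartialTranspose G) v := by
        rw [degPS]; unfold dnCnt; congr 1
        apply Finset.filter_congr
        intro w _
        rw [hS]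
        dsimp only
        rw [pt_adj]
        constructor
        · rintro ⟨h, h1, h2, h3⟩
          have h1' : w.1.val ≠ v.1.val := fun e => h1 (Fin.ext e)
          exact ⟨h, fun e => h2 e.symm, by omega⟩
        · rintro ⟨h, h2, h3⟩
          exact ⟨h, fun e => by have := congrArg Fin.val e; omega,
            fun e => h2 e.symm, Or.inl ⟨by omega, hvi1⟩⟩
      have hia : i < a := by omega
      set u : Fin a × Fin b := (⟨i, hia⟩, v.2) with hu
      have k1 : upCnt G u = dnCnt G v :=
        keyLemma G hstrat hdc i u v rfl rfl (by simp [hu, hvi1])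
      have k2 : dnCnt (PartialTranspose G) v = upCnt G u :=
        bridge2 G v u rfl (by simp [hu, hvi1])
      rw [e1, e2, k2, k1]
    · -- other rows : both degrees are zero
      have e1 : S.degree v = 0 := by
        rw [degS, Finset.card_eq_zero, Finset.filter_eq_empty_iff]
        intro w _ hw
        rw [hS] at hw
        obtain ⟨_, _, _, h3⟩ := hw
        omega
      have e2 : (PartialTranspose S).degree v = 0 := by
        rw [degPS, Finset.card_eq_zero, Finset.filter_eq_empty_iff]
        intro w _ hw
        rw [hS] at hw
        obtain ⟨_, _, _, h3⟩ := hw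
        dsimp only at h3
        omega
      rw [e1, e2]
end

section
/- Let a,b ≥ 2 and let G be a grid-labelled graph of type (a,b) with exactly two edges, both diagonal. Then ρ(G) is separable if and only if the two edges form a criss-cross: there exist i ≠ k in Fin a and j ≠ l in Fin b such that the edge set of G is { {(i,j),(k,l)}, {(i,l),(k,j)} }. -/
open Matrix Kronecker ComplexOrder

lemma star_ite01 (P : Prop) [Decidable P] : star (if P then (1:ℂ) else 0) = if P then 1 else 0 := by
  split <;> simp

lemma ite_and_mul (P Q : Prop) [Decidable P] [Decidable Q] :
    (if P ∧ Q then (1:ℂ) else 0) = (if P then 1 else 0) * (if Q then 1 else 0) := by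
  by_cases hP : P <;> by_cases hQ : Q <;> simp [hP, hQ]

lemma psd_outer {n : Type*} [Fintype n] [DecidableEq n] (c : ℝ) (hc : 0 ≤ c) (v : n → ℂ) :
    Matrix.PosSemidef (Matrix.of fun x y => (c : ℂ) * (v x * star (v y))) := by
  rw [Matrix.posSemidef_iff_dotProduct_mulVec]
  constructor
  · ext x y
    simp only [conjTranspose_apply, of_apply, star_mul', star_star]
    rw [Complex.star_def, Complex.conj_ofReal]
    ring
  · intro x
    set S : ℂ := ∑ j, star (v j) * x j with hS
    have hmv : (Matrix.of (fun x y => (c : ℂ) * (v x * star (v y))) *ᵥ x) =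
        fun i => (c : ℂ) * v i * S := by
      funext i
      simp only [mulVec, dotProduct, of_apply, hS, Finset.mul_sum]
      exact Finset.sum_congr rfl fun j _ => by ring
    rw [hmv]
    have h1 : (star x ⬝ᵥ fun i => (c : ℂ) * v i * S) = (∑ i, star (x i) * ((c:ℂ) * v i)) * S := by
      rw [dotProduct, Finset.sum_mul]
      exact Finset.sum_congr rfl fun i _ => by simp; ring
    have h2 : star S = ∑ i, star (x i) * v i := by
      rw [hS, star_sum]
      exact Finset.sum_congr rfl fun i _ => by rw [star_mul', star_star, mul_comm]
    have h3 : (∑ i, star (x i) * ((c:ℂ) * v i)) = (c:ℂ) * star S := by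
      rw [h2, Finset.mul_sum]
      exact Finset.sum_congr rfl fun i _ => by ring
    rw [h1, h3, mul_assoc]
    have h4 : 0 ≤ star S * S := star_mul_self_nonneg _
    have h5 : 0 ≤ (c : ℂ) := by rw [Complex.zero_le_real]; exact hc
    exact mul_nonneg h5 h4

lemma psd_diag_nonneg {n : Type*} [Fintype n] [DecidableEq n] {M : Matrix n n ℂ}
    (h : M.PosSemidef) (i : n) : 0 ≤ M i i := by
  have hst : star ((Pi.single i 1 : n → ℂ)) = Pi.single i 1 := by
    ext m; by_cases h : m = i <;> simp [Pi.single_apply, h]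
  have := h.dotProduct_mulVec_nonneg (Pi.single i 1)
  rw [hst] at this
  simpa [mulVec_single, single_dotProduct] using this

lemma psd_off_zero {n : Type*} [Fintype n] [DecidableEq n] {M : Matrix n n ℂ}
    (h : M.PosSemidef) {i j : n} (h0 : M i i = 0 ∨ M j j = 0) : M i j = 0 := by
  have key : ∀ k : n, M k k = 0 → ∀ m : n, M m k = 0 := by
    intro k hk m
    have hst : star ((Pi.single k 1 : n → ℂ)) = Pi.single k 1 := by
      ext m'; by_cases h' : m' = k <;> simp [Pi.single_apply, h']
    have hz : star (Pi.single k 1) ⬝ᵥ (M *ᵥ Pi.single k 1) = 0 := by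
      rw [hst]
      simpa [mulVec_single, single_dotProduct] using hk
    have := (h.dotProduct_mulVec_zero_iff (Pi.single k 1)).mp hz
    have := congrFun this m
    simpa [mulVec_single] using this
  rcases h0 with h0 | h0
  · have hji : M j i = 0 := key i h0 j
    have : M i j = star (M j i) := by
      conv_lhs => rw [← h.1]
      simp [conjTranspose_apply]
    rw [this, hji, star_zero]
  · exact key j h0 i

set_option maxHeartbeats 1600000 in
lemma lap_two_edges {V : Type*} [Fintype V] [DecidableEq V] (G : SimpleGraph V)
    [DecidableRel G.Adj] (p q r s : V)
    (hpq : p ≠ q) (hrs : r ≠ s) (hpr : p ≠ r) (hps : p ≠ s) (hqr : q ≠ r) (hqs : q ≠ s)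
    (hE : G.edgeSet = {s(p,q), s(r,s)}) (v w : V) :
    G.lapMatrix ℂ v w =
      ((if v = p then 1 else 0) - (if v = q then 1 else 0)) *
        ((if w = p then 1 else 0) - (if w = q then 1 else 0)) +
      ((if v = r then 1 else 0) - (if v = s then 1 else 0)) *
        ((if w = r then 1 else 0) - (if w = s then 1 else 0)) := by
  have hadj : ∀ x y : V, G.Adj x y ↔
      (x = p ∧ y = q) ∨ (x = q ∧ y = p) ∨ (x = r ∧ y = s) ∨ (x = s ∧ y = r) := by
    intro x y
    rw [← SimpleGraph.mem_edgeSet, hE]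
    simp only [Set.mem_insert_iff, Set.mem_singleton_iff, Sym2.eq_iff]
    tauto
  have hdeg : ∀ x : V, ((G.degree x : ℂ)) =
      (if x = p then 1 else 0) + (if x = q then 1 else 0) +
      (if x = r then 1 else 0) + (if x = s then 1 else 0) := by
    intro x
    have hnb : G.neighborFinset x =
        if x = p then {q} else if x = q then {p} else if x = r then {s}
          else if x = s then {r} else ∅ := by
      ext u
      rw [SimpleGraph.mem_neighborFinset, hadj]
      split_ifs with h1 h2 h3 h4 <;>
        simp_all [hpq, hrs, hpr, hps, hqr, hqs, hpq.symm, hrs.symm, hpr.symm, hps.symm,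
          hqr.symm, hqs.symm]
    rw [SimpleGraph.degree, hnb]
    split_ifs with h1 h2 h3 h4 <;> subst_vars <;>
      simp_all [hpq, hrs, hpr, hps, hqr, hqs, Ne.symm]
  have hlap : G.lapMatrix ℂ v w =
      (if v = w then (G.degree v : ℂ) else 0) - (if G.Adj v w then 1 else 0) := by
    rw [SimpleGraph.lapMatrix, Matrix.sub_apply, SimpleGraph.degMatrix,
      Matrix.diagonal_apply, SimpleGraph.adjMatrix_apply]
  rw [hlap, hdeg]
  rw [if_congr (hadj v w) rfl rfl]
  clear hadj hdeg hlap hE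
  by_cases h1 : v = p <;> by_cases h2 : v = q <;> by_cases h3 : v = r <;>
    by_cases h4 : v = s <;> by_cases k1 : w = p <;> by_cases k2 : w = q <;>
    by_cases k3 : w = r <;> by_cases k4 : w = s <;>
    simp_all only [ne_eq, not_false_eq_true, not_true_eq_false, if_true, if_false,
      ite_true, ite_false, eq_self_iff_true, and_true, true_and, and_false, false_and,
      or_true, true_or, or_false, false_or, or_self, not_true, not_false_iff] <;>
    norm_num <;> (intro hh; subst hh; simp_all)

set_option maxHeartbeats 1600000 in
theorem statement12 {a b : ℕ} (ha : 2 ≤ a) (hb : 2 ≤ b)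
    (G : SimpleGraph (Fin a × Fin b)) [DecidableRel G.Adj]
    (hcard : G.edgeFinset.card = 2)
    (hdiag : ∀ v w : Fin a × Fin b, G.Adj v w → v.1 ≠ w.1 ∧ v.2 ≠ w.2) :
    MatSeparable (densityMatrix G) ↔
      ∃ (i k : Fin a) (j l : Fin b), i ≠ k ∧ j ≠ l ∧
        G.edgeSet = {s(((i, j) : Fin a × Fin b), ((k, l) : Fin a × Fin b)),
                     s(((i, l) : Fin a × Fin b), ((k, j) : Fin a × Fin b))} := by
  have hcoef : densityMatrix G = (1/4 : ℂ) • G.lapMatrix ℂ := by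
    rw [densityMatrix, hcard]
    norm_num
  constructor
  · intro hsep
    obtain ⟨e1, e2, hne, hE2⟩ := Finset.card_eq_two.mp hcard
    revert hne hE2
    induction e1, e2 using Sym2.inductionOn₂ with
    | _ u1 v1 u2 v2 =>
    intro hne hE2
    obtain ⟨i, j⟩ := u1
    obtain ⟨k, l⟩ := v1
    obtain ⟨p, q⟩ := u2
    obtain ⟨r, s⟩ := v2
    have hset : G.edgeSet =
        {s(((i,j) : Fin a × Fin b), (k,l)), s(((p,q) : Fin a × Fin b), (r,s))} := by
      rw [← SimpleGraph.coe_edgeFinset, hE2]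
      simp
    have hA1 : G.Adj (i,j) (k,l) := by
      rw [← SimpleGraph.mem_edgeSet, hset]
      left; rfl
    obtain ⟨hik', hjl'⟩ := hdiag _ _ hA1
    have hik : i ≠ k := hik'
    have hjl : j ≠ l := hjl'
    by_cases hcc : s(((p,q) : Fin a × Fin b), (r,s)) = s(((i,l) : Fin a × Fin b), (k,j))
    · exact ⟨i, k, j, l, hik, hjl, by rw [hset, hcc]⟩
    · exfalso
      obtain ⟨N, A, B, hApsd, hBpsd, hrep⟩ := hsep
      have hmain : ∀ (z1 : Fin a) (z2 : Fin b),
          ((z1, z2) : Fin a × Fin b) ≠ (i,j) → ((z1,z2) : Fin a × Fin b) ≠ (k,l) →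
          ((z1,z2) : Fin a × Fin b) ≠ (p,q) → ((z1,z2) : Fin a × Fin b) ≠ (r,s) →
          ∀ n, A n z1 z1 = 0 ∨ B n z2 z2 = 0 := by
        intro z1 z2 h1 h2 h3 h4 n
        have hzadj : ∀ y, ¬ G.Adj (z1,z2) y := by
          intro y hAdj
          rw [← SimpleGraph.mem_edgeSet, hset] at hAdj
          simp only [Set.mem_insert_iff, Set.mem_singleton_iff, Sym2.eq_iff] at hAdj
          tauto
        have hdeg0 : G.degree (z1,z2) = 0 := by
          rw [SimpleGraph.degree, Finset.card_eq_zero]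
          ext y
          simp only [SimpleGraph.mem_neighborFinset, Finset.notMem_empty, iff_false]
          exact hzadj y
        have hlap0 : G.lapMatrix ℂ (z1,z2) (z1,z2) = 0 := by
          rw [SimpleGraph.lapMatrix, Matrix.sub_apply, SimpleGraph.degMatrix,
            Matrix.diagonal_apply_eq, SimpleGraph.adjMatrix_apply, hdeg0]
          simp
        have hdz : densityMatrix G (z1,z2) (z1,z2) = 0 := by
          rw [hcoef, Matrix.smul_apply, hlap0]
          simp
        have hsum0 : ∑ n, A n z1 z1 * B n z2 z2 = 0 := by
          rw [← hdz, hrep]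
          simp [Matrix.sum_apply]
        have hterm := (Finset.sum_eq_zero_iff_of_nonneg
          (fun n _ => mul_nonneg (psd_diag_nonneg (hApsd n) z1)
            (psd_diag_nonneg (hBpsd n) z2))).mp hsum0 n (Finset.mem_univ n)
        exact mul_eq_zero.mp hterm
      have hil_or : (((i,l) : Fin a × Fin b) ≠ (p,q) ∧ ((i,l) : Fin a × Fin b) ≠ (r,s)) ∨
          (((k,j) : Fin a × Fin b) ≠ (p,q) ∧ ((k,j) : Fin a × Fin b) ≠ (r,s)) := by
        by_cases hA' : ((i,l) : Fin a × Fin b) = (p,q)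
        · by_cases hD' : ((k,j) : Fin a × Fin b) = (r,s)
          · exact absurd (by rw [← hA', ← hD']) hcc
          · by_cases hC' : ((k,j) : Fin a × Fin b) = (p,q)
            · exfalso
              rw [← hA'] at hC'
              exact hik (congrArg Prod.fst hC').symm
            · right; exact ⟨hC', hD'⟩
        · by_cases hB' : ((i,l) : Fin a × Fin b) = (r,s)
          · by_cases hC' : ((k,j) : Fin a × Fin b) = (p,q)
            · exfalso
              apply hcc
              rw [← hB', ← hC']
              exact Sym2.eq_swap
            · by_cases hD' : ((k,j) : Fin a × Fin b) = (r,s)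
              · exfalso
                rw [← hB'] at hD'
                exact hik (congrArg Prod.fst hD').symm
              · right; exact ⟨hC', hD'⟩
          · left; exact ⟨hA', hB'⟩
      have hzero : ∀ n, A n i k * B n j l = 0 := by
        rcases hil_or with ⟨h3, h4⟩ | ⟨h3, h4⟩
        · have h1 : ((i,l) : Fin a × Fin b) ≠ (i,j) := fun h => hjl (congrArg Prod.snd h).symm
          have h2 : ((i,l) : Fin a × Fin b) ≠ (k,l) := fun h => hik (congrArg Prod.fst h)
          have hd := hmain i l h1 h2 h3 h4
          intro n
          rcases hd n with h | h
          · rw [psd_off_zero (hApsd n) (Or.inl h), zero_mul]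
          · rw [psd_off_zero (hBpsd n) (Or.inr h), mul_zero]
        · have h1 : ((k,j) : Fin a × Fin b) ≠ (i,j) := fun h => hik (congrArg Prod.fst h).symm
          have h2 : ((k,j) : Fin a × Fin b) ≠ (k,l) := fun h => hjl (congrArg Prod.snd h)
          have hd := hmain k j h1 h2 h3 h4
          intro n
          rcases hd n with h | h
          · rw [psd_off_zero (hApsd n) (Or.inr h), zero_mul]
          · rw [psd_off_zero (hBpsd n) (Or.inl h), mul_zero]
      have hne1 : ((i,j) : Fin a × Fin b) ≠ (k,l) := fun h => hik (congrArg Prod.fst h)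
      have hoff : densityMatrix G (i,j) (k,l) = -(1/4 : ℂ) := by
        rw [hcoef, Matrix.smul_apply, SimpleGraph.lapMatrix, Matrix.sub_apply,
          SimpleGraph.degMatrix, Matrix.diagonal_apply_ne _ hne1,
          SimpleGraph.adjMatrix_apply, if_pos hA1]
        norm_num
      have hoff2 : densityMatrix G (i,j) (k,l) = ∑ n, A n i k * B n j l := by
        rw [hrep]
        simp [Matrix.sum_apply]
      rw [hoff2, Finset.sum_eq_zero (fun n _ => hzero n)] at hoff
      norm_num at hoff
  · rintro ⟨i, k, j, l, hik, hjl, hset⟩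
    have n1 : ((i,j) : Fin a × Fin b) ≠ (k,l) := fun h => hik (congrArg Prod.fst h)
    have n2 : ((i,l) : Fin a × Fin b) ≠ (k,j) := fun h => hik (congrArg Prod.fst h)
    have n3 : ((i,j) : Fin a × Fin b) ≠ (i,l) := fun h => hjl (congrArg Prod.snd h)
    have n4 : ((i,j) : Fin a × Fin b) ≠ (k,j) := fun h => hik (congrArg Prod.fst h)
    have n5 : ((k,l) : Fin a × Fin b) ≠ (i,l) := fun h => hik (congrArg Prod.fst h).symm
    have n6 : ((k,l) : Fin a × Fin b) ≠ (k,j) := fun h => hjl (congrArg Prod.snd h).symm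
    refine ⟨2,
      ![Matrix.of fun x y => ((1/8 : ℝ) : ℂ) *
          (((if x = i then 1 else 0) - (if x = k then 1 else 0)) *
            star ((if y = i then 1 else 0) - (if y = k then 1 else 0))),
        Matrix.of fun x y => ((1/8 : ℝ) : ℂ) *
          (((if x = i then 1 else 0) + (if x = k then 1 else 0)) *
            star ((if y = i then 1 else 0) + (if y = k then 1 else 0)))],
      ![Matrix.of fun x y => ((1 : ℝ) : ℂ) *
          (((if x = j then 1 else 0) + (if x = l then 1 else 0)) *
            star ((if y = j then 1 else 0) + (if y = l then 1 else 0))),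
        Matrix.of fun x y => ((1 : ℝ) : ℂ) *
          (((if x = j then 1 else 0) - (if x = l then 1 else 0)) *
            star ((if y = j then 1 else 0) - (if y = l then 1 else 0)))],
      ?_, ?_, ?_⟩
    · intro n
      fin_cases n <;> exact psd_outer _ (by norm_num) _
    · intro n
      fin_cases n <;> exact psd_outer _ (by norm_num) _
    · have hl := lap_two_edges G (i,j) (k,l) (i,l) (k,j) n1 n2 n3 n4 n5 n6 hset
      ext ⟨x1, x2⟩ ⟨y1, y2⟩
      rw [hcoef, Matrix.smul_apply, hl (x1,x2) (y1,y2)]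
      simp only [Fin.sum_univ_two, Matrix.sum_apply, Matrix.cons_val_zero, Matrix.cons_val_one,
        Matrix.head_cons, Matrix.kroneckerMap_apply, Matrix.of_apply]
      simp only [Prod.mk.injEq, ite_and_mul, star_sub, star_add, star_ite01, smul_eq_mul]
      push_cast
      ring
end

section
/- Let G be a grid-labelled graph of type (a,b) that satisfies the degree criterion, and let {(i,j),(k,l)} be a diagonal vertex pair (i ≠ k and j ≠ l) that is not an edge of G. Let H be the grid-labelled graph obtained from G by adding the single edge {(i,j),(k,l)}. Then H does not satisfy the degree criterion. -/
open Matrix Kronecker ComplexOrder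

theorem statement14 {a b : ℕ} (G H : SimpleGraph (Fin a × Fin b))
    [DecidableRel G.Adj] [DecidableRel H.Adj]
    (hdc : ∀ v, G.degree v = (PartialTranspose G).degree v)
    (i k : Fin a) (j l : Fin b) (hik : i ≠ k) (hjl : j ≠ l)
    (hnot : ¬ G.Adj (i, j) (k, l))
    (hH : ∀ v w : Fin a × Fin b, H.Adj v w ↔
      (G.Adj v w ∨ (v = (i, j) ∧ w = (k, l)) ∨ (v = (k, l) ∧ w = (i, j)))) :
    ¬ ∀ v, H.degree v = (PartialTranspose H).degree v := by
  intro hdcH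
  have hne : (i, j) ≠ ((k, l) : Fin a × Fin b) := by
    intro h; exact hik (congrArg Prod.fst h)
  have h1 : H.degree (i, j) = G.degree (i, j) + 1 := by
    unfold SimpleGraph.degree
    have hset : H.neighborFinset (i, j) = insert (k, l) (G.neighborFinset (i, j)) := by
      ext w
      simp only [SimpleGraph.mem_neighborFinset, hH, Finset.mem_insert]
      constructor
      · rintro (h | ⟨-, h⟩ | ⟨h, -⟩)
        · exact Or.inr h
        · exact Or.inl h
        · exact absurd h hne
      · rintro (h | h)
        · exact Or.inr (Or.inl ⟨trivial, h⟩)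
        · exact Or.inl h
    rw [hset, Finset.card_insert_of_notMem]
    simp only [SimpleGraph.mem_neighborFinset]
    exact hnot
  have h2 : (PartialTranspose H).degree (i, j) = (PartialTranspose G).degree (i, j) := by
    unfold SimpleGraph.degree
    congr 1
    ext w
    simp only [SimpleGraph.mem_neighborFinset]
    simp only [PartialTranspose, hH]
    constructor
    · rintro (h | ⟨-, h⟩ | ⟨h, -⟩)
      · exact h
      · exact absurd (congrArg Prod.fst h) hik
      · exact absurd (congrArg Prod.snd h) hjl
    · exact fun h => Or.inl h
  have := hdcH (i, j)
  rw [h1, h2, ← hdc (i, j)] at this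
  omega
end

section
/- For all b ≥ 2, the number of simple graphs on the vertex set Fin 2 × Fin b with exactly 3 edges, all diagonal, that satisfy the degree criterion equals 2·C(b,3); and the number of simple graphs on Fin 2 × Fin b with exactly 4 edges, all diagonal, that satisfy the degree criterion equals 3·C(b,3) + 9·C(b,4), where C denotes the binomial coefficient. -/
open Matrix

/-- The degree criterion, phrased via `Set.ncard` of neighbour sets so that no
decidability assumptions are needed. -/
def DegCrit {a b : ℕ} (G : SimpleGraph (Fin a × Fin b)) : Prop :=
  ∀ v, (G.neighborSet v).ncard = ((PartialTranspose G).neighborSet v).ncard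

/-- `Pnum a b k`: the number of simple graphs on `Fin a × Fin b` with exactly `k`
edges that satisfy the degree criterion. -/
noncomputable def Pnum (a b k : ℕ) : ℕ :=
  Nat.card {G : SimpleGraph (Fin a × Fin b) // G.edgeSet.ncard = k ∧ DegCrit G}

/-- `Dnum a b k`: the number of simple graphs on `Fin a × Fin b` with exactly `k`
edges, all diagonal, that satisfy the degree criterion. -/
noncomputable def Dnum (a b k : ℕ) : ℕ :=
  Nat.card {G : SimpleGraph (Fin a × Fin b) //
    G.edgeSet.ncard = k ∧ (∀ v w : Fin a × Fin b, G.Adj v w → v.1 ≠ w.1 ∧ v.2 ≠ w.2) ∧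
      DegCrit G}

open Finset

def Bal {n : ℕ} (D : Finset (Fin n × Fin n)) : Prop :=
  ∀ v, (D.filter (fun p => p.1 = v)).card = (D.filter (fun p => p.2 = v)).card

instance {n : ℕ} (D : Finset (Fin n × Fin n)) : Decidable (Bal D) :=
  inferInstanceAs (Decidable (∀ _, _))

def supp {n : ℕ} (D : Finset (Fin n × Fin n)) : Finset (Fin n) :=
  D.image Prod.fst ∪ D.image Prod.snd

def GoodD {n : ℕ} (k : ℕ) (D : Finset (Fin n × Fin n)) : Prop :=
  (∀ p ∈ D, p.1 ≠ p.2) ∧ D.card = k ∧ Bal D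

instance {n k : ℕ} (D : Finset (Fin n × Fin n)) : Decidable (GoodD k D) :=
  inferInstanceAs (Decidable (_ ∧ _))

def mnum (k s : ℕ) : ℕ :=
  (((Finset.univ : Finset (Fin s × Fin s)).powersetCard k).filter
    (fun D => (∀ p ∈ D, p.1 ≠ p.2) ∧ Bal D ∧ supp D = Finset.univ)).card

lemma mem_supp_fst {n : ℕ} {D : Finset (Fin n × Fin n)} {p : Fin n × Fin n} (hp : p ∈ D) :
    p.1 ∈ supp D := by
  exact mem_union_left _ (mem_image_of_mem _ hp)

lemma mem_supp_snd {n : ℕ} {D : Finset (Fin n × Fin n)} {p : Fin n × Fin n} (hp : p ∈ D) :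
    p.2 ∈ supp D := by
  exact mem_union_right _ (mem_image_of_mem _ hp)

lemma supp_eq_empty {n : ℕ} {D : Finset (Fin n × Fin n)} (h : supp D = ∅) : D = ∅ := by
  rcases D.eq_empty_or_nonempty with h' | ⟨p, hp⟩
  · exact h'
  · exact absurd (h ▸ mem_supp_fst hp) (notMem_empty _)

lemma supp_subset_fst {n : ℕ} {D : Finset (Fin n × Fin n)} (hB : Bal D) :
    supp D ⊆ D.image Prod.fst := by
  intro v hv
  rcases mem_union.1 hv with h | h
  · exact h
  · obtain ⟨p, hp, hpv⟩ := mem_image.1 h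
    have h1 : 0 < (D.filter (fun p => p.2 = v)).card :=
      card_pos.2 ⟨p, mem_filter.2 ⟨hp, hpv⟩⟩
    rw [← hB v] at h1
    obtain ⟨q, hq⟩ := card_pos.1 h1
    have := mem_filter.1 hq
    exact mem_image.2 ⟨q, this.1, this.2⟩

lemma supp_card_le {n : ℕ} {D : Finset (Fin n × Fin n)} (hB : Bal D) :
    (supp D).card ≤ D.card :=
  le_trans (card_le_card (supp_subset_fst hB)) card_image_le

section Transfer
variable {n c : ℕ} (f : Fin n → Fin c) (D : Finset (Fin n × Fin n))

lemma injOn_map (hf : Set.InjOn f ↑(supp D)) : Set.InjOn (Prod.map f f) ↑D := by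
  intro p hp q hq h
  have h1 := congrArg Prod.fst h
  have h2 := congrArg Prod.snd h
  simp only [Prod.map_fst, Prod.map_snd] at h1 h2
  have e1 := hf (by exact_mod_cast mem_supp_fst hp) (by exact_mod_cast mem_supp_fst hq) h1
  have e2 := hf (by exact_mod_cast mem_supp_snd hp) (by exact_mod_cast mem_supp_snd hq) h2
  exact Prod.ext e1 e2

lemma card_image_map (hf : Set.InjOn f ↑(supp D)) :
    (D.image (Prod.map f f)).card = D.card :=
  card_image_of_injOn (injOn_map f D hf)

lemma supp_image : supp (D.image (Prod.map f f)) = (supp D).image f := by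
  unfold supp
  rw [image_image, image_image, image_union, image_image, image_image]
  rfl

lemma loopless_image (hf : Set.InjOn f ↑(supp D)) (hL : ∀ p ∈ D, p.1 ≠ p.2) :
    ∀ p ∈ D.image (Prod.map f f), p.1 ≠ p.2 := by
  intro p hp
  obtain ⟨q, hq, rfl⟩ := mem_image.1 hp
  intro h
  exact hL q hq (hf (by exact_mod_cast mem_supp_fst hq) (by exact_mod_cast mem_supp_snd hq) h)

lemma filter_fst_image (hf : Set.InjOn f ↑(supp D)) {v : Fin n} (hv : v ∈ supp D) :
    (D.image (Prod.map f f)).filter (fun p => p.1 = f v)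
      = (D.filter (fun p => p.1 = v)).image (Prod.map f f) := by
  ext q
  simp only [mem_filter, mem_image]
  constructor
  · rintro ⟨⟨p, hp, rfl⟩, h⟩
    have : p.1 = v := hf (by exact_mod_cast mem_supp_fst hp) (by exact_mod_cast hv) h
    exact ⟨p, ⟨hp, this⟩, rfl⟩
  · rintro ⟨p, ⟨hp1, hp2⟩, rfl⟩
    exact ⟨⟨p, hp1, rfl⟩, by simp [hp2]⟩

lemma filter_snd_image (hf : Set.InjOn f ↑(supp D)) {v : Fin n} (hv : v ∈ supp D) :
    (D.image (Prod.map f f)).filter (fun p => p.2 = f v)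
      = (D.filter (fun p => p.2 = v)).image (Prod.map f f) := by
  ext q
  simp only [mem_filter, mem_image]
  constructor
  · rintro ⟨⟨p, hp, rfl⟩, h⟩
    have : p.2 = v := hf (by exact_mod_cast mem_supp_snd hp) (by exact_mod_cast hv) h
    exact ⟨p, ⟨hp, this⟩, rfl⟩
  · rintro ⟨p, ⟨hp1, hp2⟩, rfl⟩
    exact ⟨⟨p, hp1, rfl⟩, by simp [hp2]⟩

lemma bal_image (hf : Set.InjOn f ↑(supp D)) (hB : Bal D) : Bal (D.image (Prod.map f f)) := by
  intro w
  by_cases h : ∃ v ∈ supp D, f v = w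
  · obtain ⟨v, hv, rfl⟩ := h
    rw [filter_fst_image f D hf hv, filter_snd_image f D hf hv,
      card_image_of_injOn ((injOn_map f D hf).mono (by exact_mod_cast filter_subset _ _)),
      card_image_of_injOn ((injOn_map f D hf).mono (by exact_mod_cast filter_subset _ _)),
      hB v]
  · have h1 : (D.image (Prod.map f f)).filter (fun p => p.1 = w) = ∅ := by
      rw [filter_eq_empty_iff]
      rintro q hq
      obtain ⟨p, hp, rfl⟩ := mem_image.1 hq
      exact fun hw => h ⟨p.1, mem_supp_fst hp, hw⟩
    have h2 : (D.image (Prod.map f f)).filter (fun p => p.2 = w) = ∅ := by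
      rw [filter_eq_empty_iff]
      rintro q hq
      obtain ⟨p, hp, rfl⟩ := mem_image.1 hq
      exact fun hw => h ⟨p.2, mem_supp_snd hp, hw⟩
    rw [h1, h2]

end Transfer

lemma mnum_eq (k s : ℕ) :
    mnum k s = ((Finset.univ : Finset (Finset (Fin s × Fin s))).filter
      (fun D => GoodD k D ∧ supp D = Finset.univ)).card := by
  unfold mnum
  congr 1
  ext D
  simp only [mem_filter, mem_powersetCard, mem_univ, true_and]; simp only [GoodD]
  constructor
  · rintro ⟨⟨-, hc⟩, h1, h2, h3⟩
    exact ⟨⟨h1, hc, h2⟩, h3⟩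
  · rintro ⟨⟨h1, hc, h2⟩, h3⟩
    exact ⟨⟨subset_univ _, hc⟩, h1, h2, h3⟩

lemma fiber_card {n k : ℕ} (S : Finset (Fin n)) :
    ((Finset.univ : Finset (Finset (Fin n × Fin n))).filter
      (fun D => GoodD k D ∧ supp D = S)).card = mnum k S.card := by
  rw [mnum_eq]
  rcases S.eq_empty_or_nonempty with rfl | hS
  · -- empty support case
    simp only [card_empty]
    have huniv : (Finset.univ : Finset (Fin 0)) = ∅ := rfl
    have hL : ((Finset.univ : Finset (Finset (Fin n × Fin n))).filter
        (fun D => GoodD k D ∧ supp D = ∅))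
        = if k = 0 then {∅} else ∅ := by
      split_ifs with hk
      · subst hk
        ext D
        simp only [mem_filter, mem_univ, true_and, mem_singleton]; simp only [GoodD]
        constructor
        · rintro ⟨-, h⟩; exact supp_eq_empty h
        · rintro rfl
          refine ⟨⟨by simp, rfl, fun v => by simp⟩, ?_⟩
          simp [supp]
      · ext D
        simp only [mem_filter, mem_univ, true_and, notMem_empty, iff_false]; simp only [GoodD]
        rintro ⟨⟨-, hc, -⟩, h⟩
        exact hk (by rw [← hc, supp_eq_empty h, card_empty])
    have hR : ((Finset.univ : Finset (Finset (Fin 0 × Fin 0))).filter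
        (fun D => GoodD k D ∧ supp D = Finset.univ))
        = if k = 0 then {(∅ : Finset (Fin 0 × Fin 0))} else ∅ := by
      split_ifs with hk
      · subst hk
        ext D
        have hD : D = ∅ := Subsingleton.elim _ _
        subst hD
        simp only [mem_filter, mem_univ, true_and, mem_singleton]; simp only [GoodD]
        constructor
        · intro _; trivial
        · intro _; exact ⟨⟨by simp, rfl, fun v => by simp⟩, Subsingleton.elim _ _⟩
      · ext D
        have hD : D = ∅ := Subsingleton.elim _ _
        subst hD
        simp only [mem_filter, mem_univ, true_and, notMem_empty, iff_false]; simp only [GoodD]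
        rintro ⟨⟨-, hc, -⟩, -⟩
        exact hk (by rw [← hc, card_empty])
    rw [hL]
    refine Eq.trans ?_ (congrArg Finset.card hR.symm)
    split_ifs <;> simp
  · -- nonempty support case
    have hpos : 0 < S.card := card_pos.2 hS
    set s := S.card with hs
    set e := S.orderIsoOfFin (rfl : S.card = s) with he
    set g : Fin s → Fin n := fun i => (e i : Fin n) with hg
    have hginj : Function.Injective g := by
      intro i j h
      exact e.injective (Subtype.ext h)
    have hgS : ∀ i, g i ∈ S := fun i => (e i).2
    have himg : (Finset.univ : Finset (Fin s)).image g = S := by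
      ext x
      simp only [mem_image, mem_univ, true_and]
      constructor
      · rintro ⟨i, rfl⟩; exact hgS i
      · intro hx; exact ⟨e.symm ⟨x, hx⟩, congrArg Subtype.val (e.apply_symm_apply ⟨x, hx⟩)⟩
    set h : Fin n → Fin s := fun x => if hx : x ∈ S then e.symm ⟨x, hx⟩ else ⟨0, hpos⟩ with hh
    have hhg : ∀ i, h (g i) = i := by
      intro i
      simp only [hh, dif_pos (hgS i)]
      exact e.symm_apply_apply i
    have hgh : ∀ x ∈ S, g (h x) = x := by
      intro x hx
      have h1 : h x = e.symm ⟨x, hx⟩ := by simp only [hh]; rw [dif_pos hx]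
      rw [h1]
      exact congrArg Subtype.val (e.apply_symm_apply ⟨x, hx⟩)
    have hhinj : Set.InjOn h ↑S := by
      intro x hx y hy hxy
      rw [← hgh x hx, ← hgh y hy, hxy]
    have himgh : S.image h = Finset.univ := by
      apply eq_univ_of_forall
      intro i
      exact mem_image.2 ⟨g i, hgS i, hhg i⟩
    symm
    refine card_bij' (fun D _ => D.image (Prod.map g g)) (fun D _ => D.image (Prod.map h h)) ?_ ?_ ?_ ?_
    · -- maps into
      rintro D hD
      rw [mem_filter] at hD ⊢
      obtain ⟨-, ⟨hL, hc, hB⟩, hsupp⟩ := hD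
      have hginjOn : Set.InjOn g ↑(supp D) := hginj.injOn
      refine ⟨mem_univ _, ⟨loopless_image g D hginjOn hL,
        by rw [card_image_map g D hginjOn, hc], bal_image g D hginjOn hB⟩, ?_⟩
      rw [supp_image, hsupp, himg]
    · rintro D hD
      rw [mem_filter] at hD ⊢
      obtain ⟨-, ⟨hL, hc, hB⟩, hsupp⟩ := hD
      have hhinjOn : Set.InjOn h ↑(supp D) := by rw [hsupp]; exact hhinj
      refine ⟨mem_univ _, ⟨loopless_image h D hhinjOn hL,
        by rw [card_image_map h D hhinjOn, hc], bal_image h D hhinjOn hB⟩, ?_⟩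
      rw [supp_image, hsupp, himgh]
    · -- left inverse
      rintro D hD
      show image (Prod.map h h) (image (Prod.map g g) D) = D
      rw [image_image]
      have : ∀ p ∈ D, (Prod.map h h ∘ Prod.map g g) p = p := by
        intro p _
        simp [Prod.map, hhg]
      rw [image_congr this, image_id']
    · -- right inverse
      rintro D hD
      rw [mem_filter] at hD
      obtain ⟨-, -, hsupp⟩ := hD
      show image (Prod.map g g) (image (Prod.map h h) D) = D
      rw [image_image]
      have : ∀ p ∈ D, (Prod.map g g ∘ Prod.map h h) p = p := by
        intro p hp
        have h1 := mem_supp_fst hp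
        have h2 := mem_supp_snd hp
        rw [hsupp] at h1 h2
        simp [Prod.map, hgh _ h1, hgh _ h2]
      rw [image_congr this, image_id']

lemma count_eq (n k : ℕ) :
    ((Finset.univ : Finset (Finset (Fin n × Fin n))).filter (GoodD k)).card
      = ∑ s ∈ Finset.range (n + 1), n.choose s * mnum k s := by
  rw [card_eq_sum_card_fiberwise
    (f := supp) (t := (Finset.univ : Finset (Fin n)).powerset)
    (fun D _ => mem_powerset.2 (subset_univ _))]
  have step1 : ∀ S ∈ (Finset.univ : Finset (Fin n)).powerset,
      (((Finset.univ : Finset (Finset (Fin n × Fin n))).filter (GoodD k)).filter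
        (fun D => supp D = S)).card = mnum k S.card := by
    intro S _
    rw [filter_filter]
    exact fiber_card S
  rw [sum_congr rfl step1]
  rw [sum_powerset_apply_card (fun s => mnum k s)]
  simp [card_univ, mul_comm]

lemma mnum_eq_zero {k s : ℕ} (h : k < s) : mnum k s = 0 := by
  rw [mnum_eq]
  rw [card_eq_zero, filter_eq_empty_iff]
  rintro D -
  rintro ⟨⟨-, hc, hB⟩, hsupp⟩
  have h1 : (supp D).card ≤ k := hc ▸ supp_card_le hB
  rw [hsupp, card_univ, Fintype.card_fin] at h1
  omega

set_option maxRecDepth 10000 in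
lemma mnum30 : mnum 3 0 = 0 := by decide
set_option maxRecDepth 10000 in
lemma mnum31 : mnum 3 1 = 0 := by decide
set_option maxRecDepth 10000 in
lemma mnum32 : mnum 3 2 = 0 := by decide
set_option maxRecDepth 10000 in
lemma mnum33 : mnum 3 3 = 2 := by decide
set_option maxRecDepth 10000 in
lemma mnum40 : mnum 4 0 = 0 := by decide
set_option maxRecDepth 10000 in
lemma mnum41 : mnum 4 1 = 0 := by decide
set_option maxRecDepth 10000 in
lemma mnum42 : mnum 4 2 = 0 := by decide
set_option maxRecDepth 10000 in
lemma mnum43 : mnum 4 3 = 3 := by decide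
set_option maxRecDepth 10000 in
lemma mnum44 : mnum 4 4 = 9 := by decide

lemma sum_eval (n k : ℕ) (hk : k < 5) :
    ∑ s ∈ Finset.range (n + 1), n.choose s * mnum k s
      = ∑ s ∈ Finset.range 5, n.choose s * mnum k s := by
  have e1 : ∑ s ∈ Finset.range (n + 1), n.choose s * mnum k s
      = ∑ s ∈ Finset.range (n + 5), n.choose s * mnum k s := by
    refine sum_subset (range_subset_range.2 (by omega)) ?_
    intro x hx hx'
    simp only [mem_range] at hx hx'
    rw [Nat.choose_eq_zero_of_lt (by omega : n < x), zero_mul]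
  have e2 : ∑ s ∈ Finset.range 5, n.choose s * mnum k s
      = ∑ s ∈ Finset.range (n + 5), n.choose s * mnum k s := by
    refine sum_subset (range_subset_range.2 (by omega)) ?_
    intro x hx hx'
    simp only [mem_range] at hx hx'
    rw [mnum_eq_zero (by omega : k < x), mul_zero]
  rw [e1, e2]

lemma count3 (n : ℕ) :
    ((Finset.univ : Finset (Finset (Fin n × Fin n))).filter (GoodD 3)).card
      = 2 * n.choose 3 := by
  rw [count_eq, sum_eval n 3 (by omega)]
  rw [show (5:ℕ) = 4+1 from rfl, sum_range_succ, sum_range_succ, sum_range_succ,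
    sum_range_succ, sum_range_succ]
  rw [mnum30, mnum31, mnum32, mnum33, mnum_eq_zero (by omega : 3 < 4)]
  ring

lemma count4 (n : ℕ) :
    ((Finset.univ : Finset (Finset (Fin n × Fin n))).filter (GoodD 4)).card
      = 3 * n.choose 3 + 9 * n.choose 4 := by
  rw [count_eq, sum_eval n 4 (by omega)]
  rw [show (5:ℕ) = 4+1 from rfl, sum_range_succ, sum_range_succ, sum_range_succ,
    sum_range_succ, sum_range_succ]
  rw [mnum40, mnum41, mnum42, mnum43, mnum44]
  ring

open Classical in
noncomputable def arcsOf {b : ℕ} (G : SimpleGraph (Fin 2 × Fin b)) : Finset (Fin b × Fin b) :=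
  Finset.univ.filter (fun p => G.Adj (0, p.1) (1, p.2))

def graphOf {b : ℕ} (D : Finset (Fin b × Fin b)) : SimpleGraph (Fin 2 × Fin b) where
  Adj v w := (v.1 = 0 ∧ w.1 = 1 ∧ (v.2, w.2) ∈ D) ∨ (v.1 = 1 ∧ w.1 = 0 ∧ (w.2, v.2) ∈ D)
  symm := by constructor; intro v w h; tauto
  loopless := by
    constructor
    rintro ⟨i, j⟩ (⟨h1, h2, -⟩ | ⟨h1, h2, -⟩) <;> simp_all

lemma fin2_cases : ∀ i : Fin 2, i = 0 ∨ i = 1 := by decide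

lemma mem_arcsOf {b : ℕ} (G : SimpleGraph (Fin 2 × Fin b)) (p : Fin b × Fin b) :
    p ∈ arcsOf G ↔ G.Adj (0, p.1) (1, p.2) := by
  classical
  unfold arcsOf
  simp

lemma graphOf_adj {b : ℕ} (D : Finset (Fin b × Fin b)) (v w : Fin 2 × Fin b) :
    (graphOf D).Adj v w ↔
      (v.1 = 0 ∧ w.1 = 1 ∧ (v.2, w.2) ∈ D) ∨ (v.1 = 1 ∧ w.1 = 0 ∧ (w.2, v.2) ∈ D) :=
  Iff.rfl

lemma ncard_aux {b : ℕ} (A : Set (Fin 2 × Fin b)) (c : Fin 2) (T : Finset (Fin b))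
    (hA : ∀ v : Fin 2 × Fin b, v ∈ A ↔ (v.1 = c ∧ v.2 ∈ T)) : A.ncard = T.card := by
  have h1 : A = ↑(T.image (fun l => (c, l))) := by
    ext v
    rw [hA]
    simp only [Finset.coe_image, Set.mem_image, Finset.mem_coe]
    constructor
    · rintro ⟨h, hT⟩; exact ⟨v.2, hT, by rw [← h]⟩
    · rintro ⟨l, hl, rfl⟩; exact ⟨rfl, hl⟩
  rw [h1, Set.ncard_coe_finset]
  apply card_image_of_injOn
  intro x _ y _ hxy
  exact (Prod.ext_iff.1 hxy).2

lemma card_outFin {b : ℕ} (D : Finset (Fin b × Fin b)) (j : Fin b) :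
    ((D.filter (fun p => p.1 = j)).image Prod.snd).card
      = (D.filter (fun p => p.1 = j)).card := by
  apply card_image_of_injOn
  intro p hp q hq h
  rw [mem_coe, mem_filter] at hp hq
  exact Prod.ext (hp.2.trans hq.2.symm) h

lemma card_inFin {b : ℕ} (D : Finset (Fin b × Fin b)) (j : Fin b) :
    ((D.filter (fun p => p.2 = j)).image Prod.fst).card
      = (D.filter (fun p => p.2 = j)).card := by
  apply card_image_of_injOn
  intro p hp q hq h
  rw [mem_coe, mem_filter] at hp hq
  exact Prod.ext h (hp.2.trans hq.2.symm)

lemma mem_outFin {b : ℕ} (D : Finset (Fin b × Fin b)) (j l : Fin b) :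
    l ∈ (D.filter (fun p => p.1 = j)).image Prod.snd ↔ (j, l) ∈ D := by
  simp only [mem_image, mem_filter]
  constructor
  · rintro ⟨p, ⟨hp, rfl⟩, rfl⟩; exact hp
  · intro h; exact ⟨(j, l), ⟨h, rfl⟩, rfl⟩

lemma mem_inFin {b : ℕ} (D : Finset (Fin b × Fin b)) (j l : Fin b) :
    l ∈ (D.filter (fun p => p.2 = j)).image Prod.fst ↔ (l, j) ∈ D := by
  simp only [mem_image, mem_filter]
  constructor
  · rintro ⟨p, ⟨hp, rfl⟩, rfl⟩; exact hp
  · intro h; exact ⟨(l, j), ⟨h, rfl⟩, rfl⟩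

lemma deg0 {b : ℕ} (D : Finset (Fin b × Fin b)) (j : Fin b) :
    ((graphOf D).neighborSet (0, j)).ncard = (D.filter (fun p => p.1 = j)).card := by
  rw [← card_outFin]
  apply ncard_aux _ 1
  rintro ⟨i, l⟩
  rw [SimpleGraph.mem_neighborSet, graphOf_adj, mem_outFin]
  constructor
  · rintro (⟨-, h2, h3⟩ | ⟨h1, -, -⟩)
    · exact ⟨h2, h3⟩
    · have h1' : (0 : Fin 2) = 1 := h1
      exact absurd h1' (by decide)
  · rintro ⟨h1, h2⟩
    exact Or.inl ⟨rfl, h1, h2⟩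

lemma deg1 {b : ℕ} (D : Finset (Fin b × Fin b)) (j : Fin b) :
    ((graphOf D).neighborSet (1, j)).ncard = (D.filter (fun p => p.2 = j)).card := by
  rw [← card_inFin]
  apply ncard_aux _ 0
  rintro ⟨i, l⟩
  rw [SimpleGraph.mem_neighborSet, graphOf_adj, mem_inFin]
  constructor
  · rintro (⟨h1, -, -⟩ | ⟨-, h2, h3⟩)
    · have h1' : (1 : Fin 2) = 0 := h1
      exact absurd h1' (by decide)
    · exact ⟨h2, h3⟩
  · rintro ⟨h1, h2⟩
    exact Or.inr ⟨rfl, h1, h2⟩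

lemma degPT0 {b : ℕ} (D : Finset (Fin b × Fin b)) (j : Fin b) :
    ((PartialTranspose (graphOf D)).neighborSet (0, j)).ncard
      = (D.filter (fun p => p.2 = j)).card := by
  rw [← card_inFin]
  apply ncard_aux _ 1
  rintro ⟨i, l⟩
  show (graphOf D).Adj (i, j) (0, l) ↔ _
  rw [graphOf_adj, mem_inFin]
  constructor
  · rintro (⟨-, h2, -⟩ | ⟨h1, -, h3⟩)
    · have h2' : (0 : Fin 2) = 1 := h2
      exact absurd h2' (by decide)
    · exact ⟨h1, h3⟩
  · rintro ⟨h1, h2⟩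
    exact Or.inr ⟨h1, rfl, h2⟩

lemma degPT1 {b : ℕ} (D : Finset (Fin b × Fin b)) (j : Fin b) :
    ((PartialTranspose (graphOf D)).neighborSet (1, j)).ncard
      = (D.filter (fun p => p.1 = j)).card := by
  rw [← card_outFin]
  apply ncard_aux _ 0
  rintro ⟨i, l⟩
  show (graphOf D).Adj (i, j) (1, l) ↔ _
  rw [graphOf_adj, mem_outFin]
  constructor
  · rintro (⟨h1, -, h3⟩ | ⟨-, h2, -⟩)
    · exact ⟨h1, h3⟩
    · have h2' : (1 : Fin 2) = 0 := h2
      exact absurd h2' (by decide)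
  · rintro ⟨h1, h2⟩
    exact Or.inl ⟨h1, rfl, h2⟩

lemma degcrit_iff {b : ℕ} (D : Finset (Fin b × Fin b)) : DegCrit (graphOf D) ↔ Bal D := by
  constructor
  · intro h j
    have := h (0, j)
    rwa [deg0, degPT0] at this
  · intro h v
    obtain ⟨i, j⟩ := v
    rcases fin2_cases i with rfl | rfl
    · rw [deg0, degPT0]; exact h j
    · rw [deg1, degPT1]; exact (h j).symm

lemma diag_iff {b : ℕ} (D : Finset (Fin b × Fin b)) :
    (∀ v w : Fin 2 × Fin b, (graphOf D).Adj v w → v.1 ≠ w.1 ∧ v.2 ≠ w.2)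
      ↔ (∀ p ∈ D, p.1 ≠ p.2) := by
  constructor
  · intro h p hp
    have := h (0, p.1) (1, p.2) (Or.inl ⟨rfl, rfl, hp⟩)
    exact this.2
  · rintro h v w (⟨h1, h2, h3⟩ | ⟨h1, h2, h3⟩)
    · exact ⟨by rw [h1, h2]; decide, h _ h3⟩
    · exact ⟨by rw [h1, h2]; decide, Ne.symm (h _ h3)⟩

lemma edge_ncard {b : ℕ} (D : Finset (Fin b × Fin b)) :
    (graphOf D).edgeSet.ncard = D.card := by
  have h1 : (graphOf D).edgeSet
      = ↑(D.image (fun p => s(((0 : Fin 2), p.1), ((1 : Fin 2), p.2)))) := by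
    ext e
    induction e with
    | h v w =>
      rw [SimpleGraph.mem_edgeSet, graphOf_adj]
      simp only [Finset.coe_image, Set.mem_image, Finset.mem_coe]
      constructor
      · rintro (⟨h1, h2, h3⟩ | ⟨h1, h2, h3⟩)
        · refine ⟨(v.2, w.2), h3, ?_⟩
          rw [Sym2.eq_iff]
          exact Or.inl ⟨Prod.ext h1.symm rfl, Prod.ext h2.symm rfl⟩
        · refine ⟨(w.2, v.2), h3, ?_⟩
          rw [Sym2.eq_iff]
          exact Or.inr ⟨Prod.ext h2.symm rfl, Prod.ext h1.symm rfl⟩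
      · rintro ⟨p, hp, he⟩
        rw [Sym2.eq_iff] at he
        rcases he with ⟨rfl, rfl⟩ | ⟨rfl, rfl⟩
        · exact Or.inl ⟨rfl, rfl, hp⟩
        · exact Or.inr ⟨rfl, rfl, hp⟩
  rw [h1, Set.ncard_coe_finset]
  apply card_image_of_injOn
  intro p hp q hq h
  rw [Sym2.eq_iff] at h
  rcases h with ⟨h1, h2⟩ | ⟨h1, h2⟩
  · have e1 := congrArg Prod.snd h1
    have e2 := congrArg Prod.snd h2
    simp only at e1 e2
    exact Prod.ext e1 e2
  · have e1 := congrArg Prod.fst h1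
    have e1' : (0 : Fin 2) = 1 := e1
    exact absurd e1' (by decide)

lemma arcsOf_graphOf {b : ℕ} (D : Finset (Fin b × Fin b)) : arcsOf (graphOf D) = D := by
  ext p
  rw [mem_arcsOf, graphOf_adj]
  constructor
  · rintro (⟨-, -, h⟩ | ⟨h1, -, -⟩)
    · exact h
    · have h1' : (0 : Fin 2) = 1 := h1
      exact absurd h1' (by decide)
  · intro h
    exact Or.inl ⟨rfl, rfl, h⟩

lemma graphOf_arcsOf {b : ℕ} (G : SimpleGraph (Fin 2 × Fin b))
    (hdiag : ∀ v w : Fin 2 × Fin b, G.Adj v w → v.1 ≠ w.1 ∧ v.2 ≠ w.2) :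
    graphOf (arcsOf G) = G := by
  ext ⟨i, j⟩ ⟨i', l⟩
  rw [graphOf_adj]
  simp only [mem_arcsOf]
  constructor
  · rintro (⟨h1, h2, h3⟩ | ⟨h1, h2, h3⟩)
    · have e1 : i = 0 := h1
      have e2 : i' = 1 := h2
      rw [e1, e2]
      exact h3
    · have e1 : i = 1 := h1
      have e2 : i' = 0 := h2
      rw [e1, e2]
      exact h3.symm
  · intro h
    have hne : i ≠ i' := (hdiag _ _ h).1
    rcases fin2_cases i with rfl | rfl <;> rcases fin2_cases i' with rfl | rfl
    · exact absurd rfl hne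
    · exact Or.inl ⟨rfl, rfl, h⟩
    · exact Or.inr ⟨rfl, rfl, h.symm⟩
    · exact absurd rfl hne

noncomputable def theEquiv (b k : ℕ) :
    {G : SimpleGraph (Fin 2 × Fin b) //
      G.edgeSet.ncard = k ∧ (∀ v w : Fin 2 × Fin b, G.Adj v w → v.1 ≠ w.1 ∧ v.2 ≠ w.2) ∧
        DegCrit G} ≃ {D : Finset (Fin b × Fin b) // GoodD k D} where
  toFun := fun ⟨G, hcard, hdiag, hdc⟩ =>
    ⟨arcsOf G, by
      have hG := graphOf_arcsOf G hdiag
      refine ⟨(diag_iff _).1 (by rw [hG]; exact hdiag), ?_, (degcrit_iff _).1 (by rw [hG]; exact hdc)⟩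
      rw [← edge_ncard (arcsOf G), hG, hcard]⟩
  invFun := fun ⟨D, hL, hc, hB⟩ =>
    ⟨graphOf D, by rw [edge_ncard, hc], (diag_iff D).2 hL, (degcrit_iff D).2 hB⟩
  left_inv := by
    rintro ⟨G, hcard, hdiag, hdc⟩
    exact Subtype.ext (graphOf_arcsOf G hdiag)
  right_inv := by
    rintro ⟨D, hL, hc, hB⟩
    exact Subtype.ext (arcsOf_graphOf D)

lemma dnum_eq (b k : ℕ) :
    Dnum 2 b k = ((Finset.univ : Finset (Finset (Fin b × Fin b))).filter (GoodD k)).card := by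
  rw [Dnum, Nat.card_congr (theEquiv b k), Nat.card_eq_fintype_card, Fintype.card_subtype]

theorem statement17 (b : ℕ) (hb : 2 ≤ b) :
    Dnum 2 b 3 = 2 * Nat.choose b 3 ∧
      Dnum 2 b 4 = 3 * Nat.choose b 3 + 9 * Nat.choose b 4 := by
  constructor
  · rw [dnum_eq, count3]
  · rw [dnum_eq, count4]
end
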